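/- arXiv:2412.08386 — 4 statements merged into one kernel-verified Lean document; each statement's English description precedes it below -/
import Mathlib

section
/- Let β1, β2 > 0, set p1 = ⌊β1⌋, p2 = ⌊β2⌋, and let M be a natural number with M ≥ max(β1, β2). Let K : ℝ → ℝ be a bounded measurable function supported in [−1, 1] with ∫ℝ K(x) dx = 1 and ∫ℝ K(x) x^i dx = 0 for every integer i with 1 ≤ i ≤ M. Let π : ℝ² → ℝ belong to the anisotropic Hölder class H((β1, β2), (L1, L2)). Then there exists a constant C > 0, depending only on K, β1, β2, L1, L2, such that for all (x*, y*) ∈ ℝ² and all h1, h2 ∈ (0, 1], one has |∫ℝ ∫ℝ K(u) K(v) (π(x* − h1·u, y* − h2·v) − π(x*, y*)) du dv| ≤ C (h1^{β1} + h2^{β2}). -/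
open MeasureTheory Set
open scoped Nat

/-!
Add and subtract `f (x - h₁ u) y`. Since `∫ K = 1`, the inner integral in `v` splits into the
one-dimensional kernel bias of `f (x - h₁ u) ·` at `y` plus `f (x - h₁ u) y - f x y`; integrating
against `K u`, the first part contributes at most `‖K‖₁²·L₂/p₂!·h₂^β₂` and the second is the
one-dimensional bias of `f · y` at `x`. The order of integration is never exchanged: the inner
integral only has to be measurable in `u`, which separate continuity of `f` provides.

A one-dimensional bias `∫ K u (g (x - h u) - g x) du` is at most `‖K‖₁·L/p!·h^β`: the moment
conditions annihilate the non-constant part of the Taylor polynomial of degree `p = ⌊β⌋` at `x`,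
and the Hölder condition on `g⁽ᵖ⁾` together with the Lagrange remainder of order `p - 1` bounds
`|g t - Taylor(t)|` by `L/p!·|t - x|^β`.
-/

theorem taylorWithinEval_eq_taylorWithinEval_univ {g : ℝ → ℝ} {n : ℕ} {s : Set ℝ} {a : ℝ}
    (hs : UniqueDiffOn ℝ s) (ha : a ∈ s) (hg : ContDiffAt ℝ n g a) (t : ℝ) :
    taylorWithinEval g n s a t = taylorWithinEval g n univ a t := by
  simp only [taylor_within_apply, iteratedDerivWithin_univ]
  refine Finset.sum_congr rfl fun k hk => ?_
  rw [iteratedDerivWithin_eq_iteratedDeriv hs (hg.of_le ?_) ha]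
  exact_mod_cast Nat.lt_succ_iff.mp (Finset.mem_range.mp hk)

theorem taylorWithinEval_sub_self_eq_sum (g : ℝ → ℝ) (p : ℕ) (x h u : ℝ) :
    taylorWithinEval g p univ x (x - h * u) - g x =
      ∑ k ∈ Finset.range p,
        (-h) ^ (k + 1) * iteratedDeriv (k + 1) g x / (k + 1)! * u ^ (k + 1) := by
  rw [taylor_within_apply, Finset.sum_range_succ', sub_eq_iff_eq_add]
  simp only [iteratedDerivWithin_univ, smul_eq_mul]
  congr 1
  · refine Finset.sum_congr rfl fun k _ => ?_
    rw [show x - h * u - x = -h * u by ring, mul_pow]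
    field_simp
  · simp

theorem MeasureTheory.Integrable.mul_continuous_of_support_subset {X : Type*}
    [TopologicalSpace X] [T2Space X] [MeasurableSpace X] [OpensMeasurableSpace X] {μ : Measure X} {K ψ : X → ℝ} {s : Set X}
    (hK : Integrable K μ) (hs : IsCompact s) (hKs : K.support ⊆ s) (hψ : Continuous ψ) :
    Integrable (fun u => K u * ψ u) μ := by
  rw [← integrableOn_iff_integrable_of_support_subset
    ((Function.support_mul_subset_left _ _).trans hKs)]
  exact hK.integrableOn.mul_continuousOn hψ.continuousOn hs

theorem abs_integral_mul_le_integral_abs_mul {α : Type*} [MeasurableSpace α] {μ : Measure α}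
    {K ψ : α → ℝ} {c : ℝ} (hK : Integrable K μ) (hψ : ∀ u, K u ≠ 0 → |ψ u| ≤ c) :
    |∫ u, K u * ψ u ∂μ| ≤ (∫ u, |K u| ∂μ) * c := by
  rw [← integral_mul_const, ← Real.norm_eq_abs]
  refine norm_integral_le_of_norm_le (hK.abs.mul_const c) (ae_of_all _ fun u => ?_)
  rw [Real.norm_eq_abs, abs_mul]
  rcases eq_or_ne (K u) 0 with h | h
  · simp [h]
  · exact mul_le_mul_of_nonneg_left (hψ u h) (abs_nonneg _)

theorem integral_mul_sub_eq_add_of_integral_eq_one {α : Type*} [MeasurableSpace α]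
    {μ : Measure α} {K ψ : α → ℝ} (hK : Integrable K μ) (hKint : ∫ u, K u ∂μ = 1) {c d : ℝ}
    (hψ : Integrable (fun u => K u * (ψ u - d)) μ) :
    ∫ u, K u * (ψ u - c) ∂μ = ∫ u, K u * (ψ u - d) ∂μ + (d - c) := by
  calc ∫ u, K u * (ψ u - c) ∂μ = ∫ u, (K u * (ψ u - d) + K u * (d - c)) ∂μ := by
        congr 1 with u
        ring
    _ = ∫ u, K u * (ψ u - d) ∂μ + (d - c) := by
        rw [integral_add hψ (hK.mul_const _), integral_mul_const, hKint, one_mul]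

theorem stronglyMeasurable_integral_mul_of_continuous {K : ℝ → ℝ} (hK : Measurable K)
    {F : ℝ → ℝ → ℝ} (hF₁ : ∀ v, Continuous fun u => F u v) (hF₂ : ∀ u, Continuous (F u)) :
    StronglyMeasurable fun u => ∫ v, K v * F u v := by
  have hjoint : StronglyMeasurable (Function.uncurry fun u v => K v * F u v) :=
    stronglyMeasurable_uncurry_of_continuous_of_stronglyMeasurable
      (fun v => continuous_const.mul (hF₁ v))
      fun u => (hK.mul (hF₂ u).measurable).stronglyMeasurable
  exact hjoint.integral_prod_right'

section HolderTaylor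

variable {p : ℕ} {β L : ℝ} {g : ℝ → ℝ}

theorem abs_sub_taylorWithinEval_le_of_holder (hpβ : (p : ℝ) ≤ β) (hL : 0 ≤ L)
    (hg : ContDiff ℝ p g)
    (hH : ∀ s t, |iteratedDeriv p g s - iteratedDeriv p g t| ≤ L * |s - t| ^ (β - p))
    (a t : ℝ) :
    |g t - taylorWithinEval g p univ a t| ≤ L / p ! * |t - a| ^ β := by
  rcases eq_or_ne a t with rfl | hat
  · simp only [taylorWithinEval_self, sub_self, abs_zero]
    positivity
  cases p with
  | zero => simpa using hH t a
  | succ n =>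
    obtain ⟨ξ, hξ, hrem⟩ := taylor_mean_remainder_lagrange_iteratedDeriv (n := n) hat
      (by exact_mod_cast hg.contDiffOn)
    rw [taylorWithinEval_eq_taylorWithinEval_univ (uniqueDiffOn_uIcc hat) left_mem_uIcc
      (hg.of_le (by exact_mod_cast Nat.le_succ n)).contDiffAt] at hrem
    have hta : 0 < |t - a| := abs_pos.2 (sub_ne_zero.2 hat.symm)
    have hξa : |ξ - a| ≤ |t - a| := abs_sub_left_of_mem_uIcc (uIoo_subset_uIcc_self hξ)
    have hremainder : g t - taylorWithinEval g (n + 1) univ a t =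
        (iteratedDeriv (n + 1) g ξ - iteratedDeriv (n + 1) g a) * (t - a) ^ (n + 1) / (n + 1)! := by
      rw [taylorWithinEval_succ, iteratedDerivWithin_univ, smul_eq_mul, Nat.factorial_succ]
      rw [Nat.factorial_succ] at hrem
      push_cast at hrem ⊢
      field_simp at hrem ⊢
      linear_combination hrem
    calc |g t - taylorWithinEval g (n + 1) univ a t|
        = |iteratedDeriv (n + 1) g ξ - iteratedDeriv (n + 1) g a| * |t - a| ^ (n + 1) /
            (n + 1)! := by
          rw [hremainder, abs_div, abs_mul, abs_pow, Nat.abs_cast]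
      _ ≤ L * |t - a| ^ (β - (n + 1 : ℕ)) * |t - a| ^ (n + 1) / (n + 1)! := by
          gcongr
          refine (hH ξ a).trans (mul_le_mul_of_nonneg_left ?_ hL)
          exact Real.rpow_le_rpow (abs_nonneg _) hξa (sub_nonneg.2 hpβ)
      _ = L / (n + 1)! * |t - a| ^ β := by
          rw [Real.rpow_sub_natCast hta.ne']
          field_simp

theorem integral_mul_taylorWithinEval_sub_self {K : ℝ → ℝ}
    (hK : Integrable K) (hKs : K.support ⊆ Icc (-1) 1)
    (hmom : ∀ i, 1 ≤ i → i ≤ p → ∫ u, K u * u ^ i = 0) (x h : ℝ) :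
    ∫ u, K u * (taylorWithinEval g p univ x (x - h * u) - g x) = 0 := by
  have hmono : ∀ k, Integrable fun u => K u * u ^ k := fun k =>
    hK.mul_continuous_of_support_subset isCompact_Icc hKs (continuous_pow k)
  simp_rw [taylorWithinEval_sub_self_eq_sum, Finset.mul_sum]
  rw [integral_finsetSum _ fun k _ => ?_]
  · refine Finset.sum_eq_zero fun k hk => ?_
    simp_rw [mul_left_comm (K _), integral_const_mul]
    rw [hmom (k + 1) le_add_self (Finset.mem_range.mp hk), mul_zero]
  · simp_rw [mul_left_comm (K _)]
    exact (hmono (k + 1)).const_mul _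

theorem abs_integral_mul_sub_le_of_holder {K : ℝ → ℝ} (hK : Integrable K)
    (hKs : K.support ⊆ Icc (-1) 1) (hmom : ∀ i, 1 ≤ i → i ≤ p → ∫ u, K u * u ^ i = 0)
    (hpβ : (p : ℝ) ≤ β) (hL : 0 ≤ L) (hg : ContDiff ℝ p g)
    (hH : ∀ s t, |iteratedDeriv p g s - iteratedDeriv p g t| ≤ L * |s - t| ^ (β - p))
    (x : ℝ) {h : ℝ} (hh : 0 ≤ h) :
    |∫ u, K u * (g (x - h * u) - g x)| ≤ (∫ u, |K u|) * (L / p ! * h ^ β) := by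
  set T := fun u => taylorWithinEval g p univ x (x - h * u)
  have hT : Continuous T := by
    simp only [T, taylor_within_apply]
    fun_prop
  have hg_int : Integrable fun u => K u * (g (x - h * u) - g x) :=
    hK.mul_continuous_of_support_subset isCompact_Icc hKs (by fun_prop)
  have hT_int : Integrable fun u => K u * (T u - g x) :=
    hK.mul_continuous_of_support_subset isCompact_Icc hKs (by fun_prop)
  have hremainder : ∀ u, K u ≠ 0 → |g (x - h * u) - T u| ≤ L / p ! * h ^ β := by
    intro u hu
    refine (abs_sub_taylorWithinEval_le_of_holder hpβ hL hg hH x (x - h * u)).trans ?_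
    have hβ : 0 ≤ β := (Nat.cast_nonneg p).trans hpβ
    refine mul_le_mul_of_nonneg_left (Real.rpow_le_rpow (abs_nonneg _) ?_ hβ) (by positivity)
    rw [show x - h * u - x = -(h * u) by ring, abs_neg, abs_mul, abs_of_nonneg hh]
    exact mul_le_of_le_one_right hh (abs_le.2 (hKs hu))
  calc |∫ u, K u * (g (x - h * u) - g x)|
      = |∫ u, K u * (g (x - h * u) - T u)| := by
        rw [← sub_zero (∫ u, K u * (g (x - h * u) - g x)),
          ← integral_mul_taylorWithinEval_sub_self hK hKs hmom x h, ← integral_sub hg_int hT_int]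
        congr 2 with u
        ring
    _ ≤ (∫ u, |K u|) * (L / p ! * h ^ β) := abs_integral_mul_le_integral_abs_mul hK hremainder

end HolderTaylor

section Anisotropic

variable {K : ℝ → ℝ} {p₁ p₂ : ℕ} {β₁ β₂ L₁ L₂ : ℝ} {f : ℝ → ℝ → ℝ}

theorem abs_integral_integral_mul_sub_le_of_holder (hKmeas : Measurable K) (hK : Integrable K)
    (hKs : K.support ⊆ Icc (-1) 1) (hKint : ∫ u, K u = 1)
    (hmom₁ : ∀ i, 1 ≤ i → i ≤ p₁ → ∫ u, K u * u ^ i = 0)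
    (hmom₂ : ∀ i, 1 ≤ i → i ≤ p₂ → ∫ u, K u * u ^ i = 0)
    (hpβ₁ : (p₁ : ℝ) ≤ β₁) (hpβ₂ : (p₂ : ℝ) ≤ β₂) (hL₁ : 0 ≤ L₁) (hL₂ : 0 ≤ L₂)
    (hf₁ : ∀ y, ContDiff ℝ p₁ fun t => f t y) (hf₂ : ∀ x, ContDiff ℝ p₂ (f x))
    (hH₁ : ∀ s t y, |iteratedDeriv p₁ (fun t => f t y) s - iteratedDeriv p₁ (fun t => f t y) t| ≤
      L₁ * |s - t| ^ (β₁ - p₁))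
    (hH₂ : ∀ x s t, |iteratedDeriv p₂ (f x) s - iteratedDeriv p₂ (f x) t| ≤
      L₂ * |s - t| ^ (β₂ - p₂))
    (x y : ℝ) {h₁ h₂ : ℝ} (hh₁ : 0 ≤ h₁) (hh₂ : 0 ≤ h₂) :
    |∫ u, ∫ v, K u * K v * (f (x - h₁ * u) (y - h₂ * v) - f x y)| ≤
      (∫ u, |K u|) * (L₁ / p₁ ! * h₁ ^ β₁) +
        (∫ u, |K u|) * ((∫ u, |K u|) * (L₂ / p₂ ! * h₂ ^ β₂)) := by
  have hc₁ : ∀ z, Continuous fun t => f t z := fun z => (hf₁ z).continuous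
  have hc₂ : ∀ z, Continuous (f z) := fun z => (hf₂ z).continuous
  set b := fun u => ∫ v, K v * (f (x - h₁ * u) (y - h₂ * v) - f (x - h₁ * u) y)
  have hb : ∀ u, |b u| ≤ (∫ u, |K u|) * (L₂ / p₂ ! * h₂ ^ β₂) := fun u =>
    abs_integral_mul_sub_le_of_holder hK hKs hmom₂ hpβ₂ hL₂ (hf₂ _) (hH₂ _) y hh₂
  have hb_meas : StronglyMeasurable b :=
    stronglyMeasurable_integral_mul_of_continuous hKmeas
      (fun v => ((hc₁ _).comp (by fun_prop)).sub ((hc₁ y).comp (by fun_prop)))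
      (fun u => ((hc₂ _).comp (by fun_prop)).sub continuous_const)
  have hinner : ∀ u, ∫ v, K u * K v * (f (x - h₁ * u) (y - h₂ * v) - f x y) =
      K u * b u + K u * (f (x - h₁ * u) y - f x y) := fun u => by
    simp_rw [mul_assoc (K u), integral_const_mul]
    rw [integral_mul_sub_eq_add_of_integral_eq_one hK hKint
      (ψ := fun v => f (x - h₁ * u) (y - h₂ * v)) (d := f (x - h₁ * u) y)
      (hK.mul_continuous_of_support_subset isCompact_Icc hKs
        (((hc₂ _).comp (by fun_prop)).sub continuous_const)), mul_add]
  have hKb_int : Integrable fun u => K u * b u :=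
    hK.mul_bdd hb_meas.aestronglyMeasurable (ae_of_all _ hb)
  have hKe_int : Integrable fun u => K u * (f (x - h₁ * u) y - f x y) :=
    hK.mul_continuous_of_support_subset isCompact_Icc hKs
      (((hc₁ y).comp (by fun_prop)).sub continuous_const)
  simp_rw [hinner]
  rw [integral_add hKb_int hKe_int, add_comm]
  refine (abs_add_le _ _).trans (add_le_add ?_ ?_)
  · exact abs_integral_mul_sub_le_of_holder hK hKs hmom₁ hpβ₁ hL₁ (hf₁ y) (fun s t => hH₁ s t y)
      x hh₁
  · exact abs_integral_mul_le_integral_abs_mul hK fun u _ => hb u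

end Anisotropic

/-- Bias bound for the anisotropic Hölder class: the kernel smoothing error is
bounded by `C * (h1 ^ β1 + h2 ^ β2)` uniformly over the Hölder class. -/
theorem bias_bound_anisotropic_holder
    (β1 β2 L1 L2 : ℝ) (hβ1 : 0 < β1) (hβ2 : 0 < β2)
    (hL1 : 0 < L1) (hL2 : 0 < L2)
    (M : ℕ) (hM : max β1 β2 ≤ (M : ℝ))
    (K : ℝ → ℝ) (hKmeas : Measurable K) (hKbdd : ∃ B : ℝ, ∀ x, |K x| ≤ B)
    (hKsupp : ∀ x : ℝ, x ∉ Set.Icc (-1 : ℝ) 1 → K x = 0)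
    (hKint : (∫ x : ℝ, K x) = 1)
    (hKmom : ∀ i : ℕ, 1 ≤ i → i ≤ M → (∫ x : ℝ, K x * x ^ i) = 0) :
    ∃ C : ℝ, 0 < C ∧ ∀ f : ℝ → ℝ → ℝ,
      (∀ x2 : ℝ, ContDiff ℝ (⌊β1⌋₊ : ℕ) (fun t => f t x2)) →
      (∀ x1 : ℝ, ContDiff ℝ (⌊β2⌋₊ : ℕ) (fun t => f x1 t)) →
      (∀ x1 x1' x2 : ℝ,
        |iteratedDeriv ⌊β1⌋₊ (fun t => f t x2) x1 -
            iteratedDeriv ⌊β1⌋₊ (fun t => f t x2) x1'| ≤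
          L1 * |x1 - x1'| ^ (β1 - (⌊β1⌋₊ : ℝ))) →
      (∀ x1 x2 x2' : ℝ,
        |iteratedDeriv ⌊β2⌋₊ (fun t => f x1 t) x2 -
            iteratedDeriv ⌊β2⌋₊ (fun t => f x1 t) x2'| ≤
          L2 * |x2 - x2'| ^ (β2 - (⌊β2⌋₊ : ℝ))) →
      ∀ x y h1 h2 : ℝ, 0 < h1 → h1 ≤ 1 → 0 < h2 → h2 ≤ 1 →
        |∫ u : ℝ, ∫ v : ℝ, K u * K v * (f (x - h1 * u) (y - h2 * v) - f x y)| ≤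
          C * (h1 ^ β1 + h2 ^ β2) := by
  obtain ⟨B, hB⟩ := hKbdd
  have hKs : K.support ⊆ Icc (-1) 1 := fun u hu => by_contra fun h => hu (hKsupp u h)
  have hKi : Integrable K := by
    rw [← integrableOn_iff_integrable_of_support_subset hKs]
    exact Measure.integrableOn_of_bounded measure_Icc_lt_top.ne hKmeas.aestronglyMeasurable
      (ae_of_all _ hB)
  set N := ∫ u, |K u|
  have hN : 1 ≤ N := hKint ▸ (le_abs_self _).trans abs_integral_le_integral_abs
  have hp₁M : ⌊β1⌋₊ ≤ M := Nat.floor_le_of_le ((le_max_left _ _).trans hM)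
  have hp₂M : ⌊β2⌋₊ ≤ M := Nat.floor_le_of_le ((le_max_right _ _).trans hM)
  set a₁ := L1 / (⌊β1⌋₊)!
  set a₂ := L2 / (⌊β2⌋₊)!
  have ha₁ : 0 < a₁ := div_pos hL1 (by positivity)
  have ha₂ : 0 < a₂ := div_pos hL2 (by positivity)
  refine ⟨N ^ 2 * (a₁ + a₂), by positivity, ?_⟩
  intro f hf1 hf2 hH1 hH2 x y h1 h2 h1pos _ h2pos _
  refine (abs_integral_integral_mul_sub_le_of_holder hKmeas hKi hKs hKint
    (fun i hi hip => hKmom i hi (hip.trans hp₁M)) (fun i hi hip => hKmom i hi (hip.trans hp₂M))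
    (Nat.floor_le hβ1.le) (Nat.floor_le hβ2.le) hL1.le hL2.le hf1 hf2 hH1 hH2 x y h1pos.le
    h2pos.le).trans ?_
  have hH₁ : 0 ≤ h1 ^ β1 := by positivity
  have hH₂ : 0 ≤ h2 ^ β2 := by positivity
  nlinarith [mul_le_mul_of_nonneg_right (le_self_pow₀ hN two_ne_zero) (mul_nonneg ha₁.le hH₁),
    mul_nonneg (mul_nonneg (sq_nonneg N) ha₁.le) hH₂,
    mul_nonneg (mul_nonneg (sq_nonneg N) ha₂.le) hH₁]
end

section
/- Let β > 0, s > 0, h > 0, and ξ, y*, λ0 ∈ ℝ with ξ < y*, |λ0 − y*| ≤ h, h ≤ (y* − ξ)/4, and (e^{β s} − 1)(y* − ξ) ≥ 4h. Then (1/β) · (log(e^{β s}(y* − ξ + h) + ξ − λ0) − log(e^{β s}(y* − ξ − h) + ξ − λ0)) ≤ 8 h e^{β s} / (β (e^{β s} − 1)(y* − ξ)). -/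
/-- Bound on the length `(1/β)(log ℓ̃_d − log ℓ̃_g)` of the interval of admissible
first jump times in the variance analysis. -/
theorem admissible_interval_length_bound
    (β s h ξ ystar lam0 : ℝ) (hβ : 0 < β) (hs : 0 < s) (hh : 0 < h)
    (hξ : ξ < ystar) (hlam0 : |lam0 - ystar| ≤ h) (hh4 : h ≤ (ystar - ξ) / 4)
    (hlb : 4 * h ≤ (Real.exp (β * s) - 1) * (ystar - ξ)) :
    (1 / β) * (Real.log (Real.exp (β * s) * (ystar - ξ + h) + ξ - lam0) -
        Real.log (Real.exp (β * s) * (ystar - ξ - h) + ξ - lam0)) ≤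
      8 * h * Real.exp (β * s) / (β * (Real.exp (β * s) - 1) * (ystar - ξ)) := by
  set E := Real.exp (β * s) with hEdef
  have hE1 : 1 < E := by
    rw [hEdef]
    have h1 := Real.add_one_lt_exp (mul_pos hβ hs).ne'
    have h2 := mul_pos hβ hs
    linarith
  have hy : 0 < ystar - ξ := sub_pos.mpr hξ
  have hlam : lam0 - ystar ≤ h ∧ -(h) ≤ lam0 - ystar := by
    constructor
    · exact (abs_le.mp hlam0).2
    · exact (abs_le.mp hlam0).1
  set a := E * (ystar - ξ - h) + ξ - lam0 with hadef
  set b := E * (ystar - ξ + h) + ξ - lam0 with hbdef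
  -- lower bound on a
  have hakey : (E - 1) * (ystar - ξ) / 4 ≤ a := by
    have h1 : lam0 ≤ ystar + h := by linarith [hlam.1]
    have h2 : E * (ystar - ξ - h) + ξ - (ystar + h) ≤ a := by
      rw [hadef]; linarith
    have h3 : (E + 1) * h ≤ 3 / 4 * ((E - 1) * (ystar - ξ)) := by
      have hEh : (E - 1) * h ≤ (E - 1) * ((ystar - ξ) / 4) :=
        mul_le_mul_of_nonneg_left hh4 (by linarith)
      nlinarith
    nlinarith
  have ha : 0 < a := lt_of_lt_of_le (by nlinarith) hakey
  have hba : b - a = 2 * h * E := by rw [hadef, hbdef]; ring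
  have hb : 0 < b := by nlinarith
  -- log b - log a ≤ (b-a)/a
  have hlog : Real.log b - Real.log a ≤ (b - a) / a := by
    have := Real.log_le_sub_one_of_pos (div_pos hb ha)
    rw [Real.log_div hb.ne' ha.ne'] at this
    have h2 : b / a - 1 = (b - a) / a := by field_simp
    linarith [this, h2 ▸ this]
  have hD : 0 < (E - 1) * (ystar - ξ) := mul_pos (by linarith) hy
  have hE0 : 0 < E := by linarith
  have hstep : (b - a) / a ≤ 8 * h * E / ((E - 1) * (ystar - ξ)) := by
    rw [hba]
    rw [div_le_div_iff₀ ha hD]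
    have h8 : 0 < 8 * h * E := by positivity
    nlinarith [mul_le_mul_of_nonneg_left hakey h8.le]
  have hfin : Real.log b - Real.log a ≤ 8 * h * E / ((E - 1) * (ystar - ξ)) :=
    le_trans hlog hstep
  have : (1 / β) * (Real.log b - Real.log a) ≤
      (1 / β) * (8 * h * E / ((E - 1) * (ystar - ξ))) :=
    mul_le_mul_of_nonneg_left hfin (by positivity)
  calc (1 / β) * (Real.log b - Real.log a)
      ≤ (1 / β) * (8 * h * E / ((E - 1) * (ystar - ξ))) := this
    _ = 8 * h * E / (β * (E - 1) * (ystar - ξ)) := by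
        rw [mul_assoc β, one_div, inv_mul_eq_div, div_div, mul_comm ((E - 1) * (ystar - ξ)) β]
end

section
/- Let f1 : (0, ∞) → [0, ∞) be decreasing and integrable on (0, L] for every L > 0, let ξ > 0, c ≥ 0, a > 0, and let J ⊆ [0, ∞) be an interval of length |J| > 0. Let f2 : [0, ∞) → [0, c] be a measurable function vanishing outside J. Then ∫₀^{a} f1(a − u) f2(u) ξ e^{−ξ u} du ≤ c ξ ∫₀^{min(a, |J|)} f1(v) dv ≤ c ξ ∫₀^{|J|} f1(v) dv. -/
/-!
The weight `u ↦ f2 u * ξ e^{-ξu}` is at most `c ξ` on `(0, a)` and vanishes off `J`, so the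
integral is at most `c ξ ∫_R f1 (a - u) du` for a measurable hull `R` of `(0, a) ∩ J`. The
reflection `u ↦ a - u` turns this into the integral of `f1` over a subset of `(0, a)` of measure at
most `min a |J|`, and since `f1` is decreasing, among sets of a given measure the initial interval
carries the largest integral (bathtub principle).
-/

open MeasureTheory Set

theorem measure_sdiff_le_measure_sdiff_of_le {α : Type*} [MeasurableSpace α] {μ : Measure α}
    {s t : Set α} (hs : MeasurableSet s) (ht : MeasurableSet t) (hst : μ s ≤ μ t)
    (hfin : μ (s ∩ t) ≠ ⊤) : μ (s \ t) ≤ μ (t \ s) := by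
  refine ENNReal.le_of_add_le_add_left hfin ?_
  rwa [measure_inter_add_sdiff s ht, inter_comm, measure_inter_add_sdiff t hs]

theorem setIntegral_le_integral_Ioc_of_antitoneOn {f : ℝ → ℝ} {S : Set ℝ} {L : ℝ} (hL : 0 < L)
    (hf : AntitoneOn f (Ioi 0)) (hfL : 0 ≤ f L) (hfS : IntegrableOn f S)
    (hfI : IntegrableOn f (Ioc 0 L)) (hS : MeasurableSet S) (hS_pos : S ⊆ Ioi 0)
    (hSL : volume S ≤ ENNReal.ofReal L) :
    ∫ x in S, f x ≤ ∫ x in Ioc 0 L, f x := by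
  have hI : volume (Ioc 0 L) ≠ ⊤ := measure_Ioc_lt_top.ne
  have hIS : volume (Ioc 0 L \ S) ≠ ⊤ := measure_ne_top_of_subset sdiff_subset hI
  have hvol : volume (S \ Ioc 0 L) ≤ volume (Ioc 0 L \ S) :=
    measure_sdiff_le_measure_sdiff_of_le hS measurableSet_Ioc (by simpa using hSL)
      (measure_ne_top_of_subset inter_subset_right hI)
  have hlow : ∀ x ∈ S \ Ioc 0 L, f x ≤ f L := fun x ⟨hxS, hxI⟩ =>
    hf (mem_Ioi.2 hL) (hS_pos hxS) (le_of_lt (not_le.1 fun h => hxI ⟨hS_pos hxS, h⟩))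
  have hhigh : ∀ x ∈ Ioc 0 L \ S, f L ≤ f x := fun x ⟨hxI, _⟩ => hf hxI.1 (mem_Ioi.2 hL) hxI.2
  have htail : ∫ x in S \ Ioc 0 L, f x ≤ f L * volume.real (Ioc 0 L \ S) :=
    calc ∫ x in S \ Ioc 0 L, f x ≤ ∫ x in S \ Ioc 0 L, f L :=
          setIntegral_mono_on (hfS.mono_set sdiff_subset)
            (integrableOn_const (ne_top_of_le_ne_top hIS hvol)) (hS.diff measurableSet_Ioc) hlow
      _ = f L * volume.real (S \ Ioc 0 L) := by rw [setIntegral_const, smul_eq_mul, mul_comm]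
      _ ≤ f L * volume.real (Ioc 0 L \ S) :=
          mul_le_mul_of_nonneg_left (ENNReal.toReal_mono hIS hvol) hfL
  calc ∫ x in S, f x = (∫ x in S ∩ Ioc 0 L, f x) + ∫ x in S \ Ioc 0 L, f x :=
        (integral_inter_add_sdiff measurableSet_Ioc hfS).symm
    _ ≤ (∫ x in Ioc 0 L ∩ S, f x) + ∫ x in Ioc 0 L \ S, f x := by
        rw [inter_comm]
        exact add_le_add le_rfl <| htail.trans (setIntegral_ge_of_const_le_real
          (measurableSet_Ioc.diff hS) hIS hhigh (hfI.mono_set sdiff_subset))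
    _ = ∫ x in Ioc 0 L, f x := integral_inter_add_sdiff hS hfI

theorem setIntegral_comp_sub_left {E : Type*} [NormedAddCommGroup E] [NormedSpace ℝ E]
    (f : ℝ → E) (a : ℝ) (s : Set ℝ) :
    ∫ x in s, f (a - x) = ∫ x in (a - ·) ⁻¹' s, f x := by
  rw [← (Measure.measurePreserving_sub_left volume a).setIntegral_preimage_emb
    (measurableEmbedding_subLeft a) f ((a - ·) ⁻¹' s), preimage_preimage]
  simp only [sub_sub_cancel, preimage_id']

theorem integrableOn_comp_sub_left_iff {E : Type*} [NormedAddCommGroup E] {f : ℝ → E} {a : ℝ}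
    {s : Set ℝ} : IntegrableOn (fun x => f (a - x)) s ↔ IntegrableOn f ((a - ·) ⁻¹' s) := by
  rw [← (Measure.measurePreserving_sub_left volume a).integrableOn_comp_preimage
    (measurableEmbedding_subLeft a) (f := f) (s := (a - ·) ⁻¹' s), preimage_preimage]
  simp only [Function.comp_def, sub_sub_cancel, preimage_id']

theorem setIntegral_le_of_le_of_nonneg {α : Type*} [MeasurableSpace α] {μ : Measure α}
    {f g : α → ℝ} {s : Set α} (hs : MeasurableSet s) (hg : IntegrableOn g s μ)
    (hg_nonneg : ∀ x ∈ s, 0 ≤ g x) (hfg : ∀ x ∈ s, f x ≤ g x) :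
    ∫ x in s, f x ∂μ ≤ ∫ x in s, g x ∂μ := by
  by_cases hf : IntegrableOn f s μ
  · exact setIntegral_mono_on hf hg hs hfg
  · rw [integral_undef hf]
    exact setIntegral_nonneg hs hg_nonneg

theorem integral_comp_sub_mul_le {f w : ℝ → ℝ} {a C : ℝ} {J : Set ℝ} (ha : 0 < a) (hC : 0 ≤ C)
    (hJ : 0 < (volume J).toReal) (hf_nonneg : ∀ x, 0 < x → 0 ≤ f x)
    (hf_anti : AntitoneOn f (Ioi 0)) (hf_int : IntegrableOn f (Ioc 0 a))
    (hw_le : ∀ u ∈ Ioo 0 a, w u ≤ C) (hw_supp : ∀ u ∉ J, w u = 0) :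
    ∫ u in 0..a, f (a - u) * w u ≤ C * ∫ v in 0..min a (volume J).toReal, f v := by
  set m := min a (volume J).toReal
  have hm : 0 < m := lt_min ha hJ
  set R := Ioo 0 a ∩ toMeasurable volume J
  set S := (a - ·) ⁻¹' R
  have hR : MeasurableSet R := measurableSet_Ioo.inter (measurableSet_toMeasurable _ _)
  have hS_sub : S ⊆ Ioc 0 a := fun v hv => ⟨by linarith [hv.1.2], by linarith [hv.1.1]⟩
  have hS_vol : volume S ≤ ENNReal.ofReal m := by
    rw [(Measure.measurePreserving_sub_left volume a).measure_preimage hR.nullMeasurableSet,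
      ENNReal.ofReal_min, ENNReal.ofReal_toReal (fun h => by simp [h] at hJ)]
    refine le_min ((measure_mono inter_subset_left).trans (by rw [Real.volume_Ioo, sub_zero])) ?_
    exact (measure_mono inter_subset_right).trans (measure_toMeasurable J).le
  have hfS : IntegrableOn f S := hf_int.mono_set hS_sub
  have hf_reflected : ∀ u ∈ R, 0 ≤ f (a - u) := fun u hu => hf_nonneg _ (by linarith [hu.1.2])
  calc ∫ u in 0..a, f (a - u) * w u = ∫ u in R, f (a - u) * w u := by
        rw [intervalIntegral.integral_of_le ha.le, integral_Ioc_eq_integral_Ioo]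
        refine setIntegral_eq_of_subset_of_forall_sdiff_eq_zero measurableSet_Ioo
          inter_subset_left fun u hu => ?_
        rw [hw_supp u fun huJ => hu.2 ⟨hu.1, subset_toMeasurable _ _ huJ⟩, mul_zero]
    _ ≤ ∫ u in R, C * f (a - u) :=
        setIntegral_le_of_le_of_nonneg hR ((integrableOn_comp_sub_left_iff.2 hfS).const_mul _)
          (fun u hu => mul_nonneg hC (hf_reflected u hu)) fun u hu => by
            rw [mul_comm C]
            exact mul_le_mul_of_nonneg_left (hw_le u hu.1) (hf_reflected u hu)
    _ = C * ∫ v in S, f v := by rw [integral_const_mul, setIntegral_comp_sub_left]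
    _ ≤ C * ∫ v in 0..m, f v := by
        rw [intervalIntegral.integral_of_le hm.le]
        exact mul_le_mul_of_nonneg_left (setIntegral_le_integral_Ioc_of_antitoneOn hm hf_anti
          (hf_nonneg m hm) hfS (hf_int.mono_set (Ioc_subset_Ioc_right (min_le_left _ _)))
          (measurableSet_preimage (measurable_const.sub measurable_id) hR)
          (hS_sub.trans Ioc_subset_Ioi_self) hS_vol) hC

theorem exp_average_product_bound_general
    (f1 : ℝ → ℝ)
    (hf1nonneg : ∀ x : ℝ, 0 < x → 0 ≤ f1 x)
    (hf1anti : ∀ x y : ℝ, 0 < x → x ≤ y → f1 y ≤ f1 x)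
    (hf1int : ∀ L : ℝ, 0 < L → IntegrableOn f1 (Set.Ioc 0 L))
    (ξ c a : ℝ) (hξ : 0 < ξ) (hc : 0 ≤ c) (ha : 0 < a)
    (J : Set ℝ)
    (hJlen : 0 < (volume J).toReal)
    (f2 : ℝ → ℝ)
    (hf2le : ∀ u : ℝ, 0 ≤ u → f2 u ≤ c)
    (hf2supp : ∀ u : ℝ, u ∉ J → f2 u = 0) :
    (∫ u in (0:ℝ)..a, f1 (a - u) * f2 u * (ξ * Real.exp (-ξ * u))) ≤
        c * ξ * (∫ v in (0:ℝ)..(min a ((volume J).toReal)), f1 v) ∧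
      c * ξ * (∫ v in (0:ℝ)..(min a ((volume J).toReal)), f1 v) ≤
        c * ξ * (∫ v in (0:ℝ)..((volume J).toReal), f1 v) := by
  have hcξ : 0 ≤ c * ξ := mul_nonneg hc hξ.le
  have hweight : ∀ u ∈ Ioo 0 a, f2 u * (ξ * Real.exp (-ξ * u)) ≤ c * ξ := fun u hu =>
    have hdensity : ξ * Real.exp (-ξ * u) ≤ ξ :=
      mul_le_of_le_one_right hξ.le (Real.exp_le_one_iff.2 (by nlinarith [hu.1]))
    (mul_le_mul_of_nonneg_right (hf2le u hu.1.le) (by positivity)).trans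
      (mul_le_mul_of_nonneg_left hdensity hc)
  refine ⟨?_, mul_le_mul_of_nonneg_left ?_ hcξ⟩
  · simp only [mul_assoc (f1 _)]
    exact integral_comp_sub_mul_le ha hcξ hJlen hf1nonneg (fun x hx y _ hxy => hf1anti x y hx hxy)
      (hf1int a ha) hweight fun u hu => by rw [hf2supp u hu, zero_mul]
  · refine intervalIntegral.integral_mono_interval le_rfl (lt_min ha hJlen).le (min_le_right _ _)
      ?_ ((intervalIntegrable_iff_integrableOn_Ioc_of_le hJlen.le).2 (hf1int _ hJlen))
    filter_upwards [self_mem_ae_restrict measurableSet_Ioc] with x hx using hf1nonneg x hx.1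

/-- Bound on the exponential-law average of a product functional `f1(a − u) f2(u)`,
where `f1` is nonnegative, decreasing and locally integrable near `0`, and `f2` is
bounded by `c` and supported in an interval `J ⊆ [0, ∞)` of positive length. -/
theorem exp_average_product_bound
    (f1 : ℝ → ℝ)
    (hf1nonneg : ∀ x : ℝ, 0 < x → 0 ≤ f1 x)
    (hf1anti : ∀ x y : ℝ, 0 < x → x ≤ y → f1 y ≤ f1 x)
    (hf1int : ∀ L : ℝ, 0 < L → IntegrableOn f1 (Set.Ioc 0 L))
    (ξ c a : ℝ) (hξ : 0 < ξ) (hc : 0 ≤ c) (ha : 0 < a)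
    (J : Set ℝ) (hJconn : J.OrdConnected) (hJsub : J ⊆ Set.Ici 0)
    (hJlen : 0 < (volume J).toReal)
    (f2 : ℝ → ℝ) (hf2meas : Measurable f2)
    (hf2nonneg : ∀ u : ℝ, 0 ≤ u → 0 ≤ f2 u)
    (hf2le : ∀ u : ℝ, 0 ≤ u → f2 u ≤ c)
    (hf2supp : ∀ u : ℝ, u ∉ J → f2 u = 0) :
    (∫ u in (0:ℝ)..a, f1 (a - u) * f2 u * (ξ * Real.exp (-ξ * u))) ≤
        c * ξ * (∫ v in (0:ℝ)..(min a ((volume J).toReal)), f1 v) ∧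
      c * ξ * (∫ v in (0:ℝ)..(min a ((volume J).toReal)), f1 v) ≤
        c * ξ * (∫ v in (0:ℝ)..((volume J).toReal), f1 v) :=
  exp_average_product_bound_general f1 hf1nonneg hf1anti hf1int ξ c a hξ hc ha J hJlen f2 hf2le
    hf2supp
end

section
/- For every real q ≥ 1, ε > 0, and A > 0, there exists C > 0 such that for all t ≥ 0, all α, α̂ ∈ [0, A], and all β, β̂ ≥ ε, one has ∫₀^{t} |α e^{−β(t−u)} − α̂ e^{−β̂(t−u)}|^{q} du ≤ C (|α − α̂|^{q} + |β − β̂|^{q}). -/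
open MeasureTheory

section Helpers
open Real Set

-- helper 1: real version of (x+y)^p ≤ 2^(p-1)(x^p+y^p)
lemma my_add_rpow_le (x y p : ℝ) (hx : 0 ≤ x) (hy : 0 ≤ y) (hp : 1 ≤ p) :
    (x + y) ^ p ≤ 2 ^ (p - 1) * (x ^ p + y ^ p) := by
  have h := NNReal.rpow_add_le_mul_rpow_add_rpow x.toNNReal y.toNNReal hp
  calc (x + y) ^ p = ((x.toNNReal + y.toNNReal : NNReal) : ℝ) ^ p := by
        rw [NNReal.coe_add, Real.coe_toNNReal _ hx, Real.coe_toNNReal _ hy]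
    _ = (((x.toNNReal + y.toNNReal) ^ p : NNReal) : ℝ) := by
        rw [NNReal.coe_rpow]
    _ ≤ ((2 ^ (p - 1) * (x.toNNReal ^ p + y.toNNReal ^ p) : NNReal) : ℝ) := by
        exact_mod_cast h
    _ = 2 ^ (p - 1) * (x ^ p + y ^ p) := by
        push_cast [NNReal.coe_rpow, Real.coe_toNNReal _ hx, Real.coe_toNNReal _ hy]
        ring

-- helper 2: exp difference bound
lemma my_exp_diff (ε s b b' : ℝ) (hs : 0 ≤ s) (hb : ε ≤ b) (hb' : ε ≤ b') :
    |Real.exp (-b * s) - Real.exp (-b' * s)| ≤ |b - b'| * (s * Real.exp (-ε * s)) := by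
  wlog h : b ≤ b' generalizing b b'
  · have := this b' b hb' hb (le_of_not_ge h)
    rwa [abs_sub_comm, abs_sub_comm b' b] at this
  have h3 : Real.exp (-b' * s) = Real.exp (-b * s) * Real.exp (-((b' - b) * s)) := by
    rw [← Real.exp_add]; ring_nf
  have h2 : 1 - Real.exp (-((b' - b) * s)) ≤ (b' - b) * s := by
    linarith [Real.add_one_le_exp (-((b' - b) * s))]
  have h2' : 0 ≤ 1 - Real.exp (-((b' - b) * s)) := by
    have : Real.exp (-((b' - b) * s)) ≤ 1 := Real.exp_le_one_iff.mpr (by nlinarith)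
    linarith
  have h1 : Real.exp (-b * s) ≤ Real.exp (-ε * s) := Real.exp_le_exp.2 (by nlinarith)
  have habs : |b - b'| = b' - b := by rw [abs_sub_comm]; exact abs_of_nonneg (by linarith)
  rw [habs, h3]
  have hnn : 0 ≤ Real.exp (-b*s) - Real.exp (-b*s) * Real.exp (-((b'-b)*s)) := by
    nlinarith [Real.exp_pos (-b*s)]
  rw [abs_of_nonneg hnn]
  nlinarith [Real.exp_pos (-b*s), Real.exp_pos (-ε*s)]

-- pointwise kernel bound
lemma my_ptwise (ε A a a' b b' s : ℝ) (hs : 0 ≤ s) (ha : a ∈ Icc 0 A) (ha' : a' ∈ Icc 0 A)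
    (hb : ε ≤ b) (hb' : ε ≤ b') (hε : 0 < ε) :
    |a * Real.exp (-b * s) - a' * Real.exp (-b' * s)| ≤
      |a - a'| * Real.exp (-ε * s) + A * |b - b'| * (s * Real.exp (-ε * s)) := by
  have key : a * Real.exp (-b*s) - a' * Real.exp (-b'*s)
      = (a - a') * Real.exp (-b*s) + a' * (Real.exp (-b*s) - Real.exp (-b'*s)) := by ring
  calc |a * Real.exp (-b*s) - a' * Real.exp (-b'*s)|
      ≤ |(a - a') * Real.exp (-b*s)| + |a' * (Real.exp (-b*s) - Real.exp (-b'*s))| := by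
        rw [key]; exact abs_add_le _ _
    _ ≤ |a - a'| * Real.exp (-ε * s) + A * (|b - b'| * (s * Real.exp (-ε * s))) := by
        gcongr ?_ + ?_
        · rw [abs_mul, abs_of_nonneg (Real.exp_pos _).le]
          have : Real.exp (-b*s) ≤ Real.exp (-ε*s) := Real.exp_le_exp.2 (by nlinarith)
          exact mul_le_mul_of_nonneg_left this (abs_nonneg _)
        · rw [abs_mul]
          have h1 : |a'| ≤ A := by rw [abs_of_nonneg ha'.1]; exact ha'.2
          have h2 := my_exp_diff ε s b b' hs hb hb'
          exact mul_le_mul h1 h2 (abs_nonneg _) (by linarith [ha.1, ha.2, ha'.1])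
    _ = _ := by ring

-- integral of exp(-c s) over [0,t]
lemma my_I1 (c t : ℝ) (hc : 0 < c) (ht : 0 ≤ t) :
    ∫ s in (0:ℝ)..t, Real.exp (-(c * s)) ≤ 1 / c := by
  have hd : ∀ x ∈ Set.uIcc (0:ℝ) t,
      HasDerivAt (fun x => -Real.exp (-(c*x))/c) (Real.exp (-(c*x))) x := by
    intro x _
    simpa [hc.ne'] using (((hasDerivAt_id x).const_mul c).neg.exp.neg.div_const c)
  have hcont : IntervalIntegrable (fun x => Real.exp (-(c*x))) volume 0 t :=
    (Real.continuous_exp.comp (continuous_const.mul continuous_id).neg).intervalIntegrable 0 t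
  rw [intervalIntegral.integral_eq_sub_of_hasDerivAt hd hcont]
  have := Real.exp_pos (-(c*t))
  have h1 : Real.exp (-(c*(0:ℝ))) = 1 := by norm_num
  rw [h1, div_sub_div_same, div_le_div_iff₀ hc hc]
  nlinarith

-- integrability of s^q exp(-(c s)) on Ioi 0
lemma my_int2_integrable (q c : ℝ) (hq : 0 ≤ q) (hc : 0 < c) :
    IntegrableOn (fun s : ℝ => s ^ q * Real.exp (-(c * s))) (Ioi 0) := by
  apply integrable_of_isBigO_exp_neg (b := c/2) (half_pos hc)
  · exact ((Real.continuous_rpow_const hq).mul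
      (Real.continuous_exp.comp (continuous_const.mul continuous_id).neg)).continuousOn
  · have h := tendsto_rpow_mul_exp_neg_mul_atTop_nhds_zero q (c/2) (half_pos hc)
    rw [Asymptotics.isBigO_iff]
    refine ⟨1, ?_⟩
    have h2 := NormedAddCommGroup.tendsto_nhds_zero.mp h 1 one_pos
    filter_upwards [h2, Filter.eventually_ge_atTop (0:ℝ)] with x hx hx0
    have hsplit : Real.exp (-(c*x)) = Real.exp (-(c/2) * x) * Real.exp (-(c/2) * x) := by
      rw [← Real.exp_add]; ring_nf
    have hxq : 0 ≤ x ^ q := Real.rpow_nonneg hx0 q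
    have hx' : x ^ q * Real.exp (-(c/2) * x) ≤ 1 := by
      have := le_of_lt hx
      rwa [Real.norm_eq_abs, abs_of_nonneg (by positivity)] at this
    rw [Real.norm_eq_abs, Real.norm_eq_abs, hsplit, abs_of_nonneg (by positivity),
      abs_of_nonneg (Real.exp_pos _).le]
    nlinarith [Real.exp_pos (-(c/2)*x)]

-- bound for integral of s^q exp(-(c s))
lemma my_I2 (q c t : ℝ) (hq : 0 ≤ q) (hc : 0 < c) (ht : 0 ≤ t) :
    ∫ s in (0:ℝ)..t, s ^ q * Real.exp (-(c * s)) ≤ (1/c) ^ (q+1) * Real.Gamma (q+1) := by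
  rw [intervalIntegral.integral_of_le ht]
  have hint := my_int2_integrable q c hq hc
  have hmon : ∫ s in Ioc 0 t, s ^ q * Real.exp (-(c*s)) ≤
      ∫ s in Ioi 0, s ^ q * Real.exp (-(c*s)) := by
    apply setIntegral_mono_set hint
    · filter_upwards [ae_restrict_mem measurableSet_Ioi] with x hx
      have : (0:ℝ) < x := hx
      positivity
    · exact HasSubset.Subset.eventuallyLE Ioc_subset_Ioi_self
  refine hmon.trans ?_
  have hval := Real.integral_rpow_mul_exp_neg_mul_Ioi (show (0:ℝ) < q+1 by linarith) hc
  simp only [add_sub_cancel_right] at hval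
  rw [hval]
end Helpers

open Real Set in
/-- Uniform-in-time bound for the `q`-th power integral of the difference of two
exponential excitation kernels with parameters in `[0, A] × [ε, ∞)`. -/
theorem exp_kernel_difference_integral_bound
    (q ε A : ℝ) (hq : 1 ≤ q) (hε : 0 < ε) (hA : 0 < A) :
    ∃ C : ℝ, 0 < C ∧ ∀ t : ℝ, 0 ≤ t → ∀ a a' b b' : ℝ,
      a ∈ Set.Icc 0 A → a' ∈ Set.Icc 0 A → ε ≤ b → ε ≤ b' →
      (∫ u in (0:ℝ)..t,
          |a * Real.exp (-b * (t - u)) - a' * Real.exp (-b' * (t - u))| ^ q) ≤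
        C * (|a - a'| ^ q + |b - b'| ^ q) := by
  have hq0 : (0:ℝ) ≤ q := by linarith
  set c : ℝ := q * ε with hc_def
  have hc : 0 < c := by positivity
  set K₂ : ℝ := (1/c) ^ (q+1) * Real.Gamma (q+1) with hK₂_def
  have hK₂ : 0 < K₂ := by positivity
  refine ⟨2 ^ (q-1) * (1/c) + 2 ^ (q-1) * A ^ q * K₂, by positivity, ?_⟩
  intro t ht a a' b b' ha ha' hb hb'
  set Δa := |a - a'| with hΔa
  set Δb := |b - b'| with hΔb
  have hΔa0 : 0 ≤ Δa := abs_nonneg _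
  have hΔb0 : 0 ≤ Δb := abs_nonneg _
  -- continuity facts
  have hconte : Continuous fun u : ℝ => Real.exp (-(c * (t - u))) :=
    Real.continuous_exp.comp (continuous_const.mul (continuous_const.sub continuous_id)).neg
  have hcontp : Continuous fun u : ℝ => (t - u) ^ q :=
    (continuous_const.sub continuous_id).rpow_const fun _ => Or.inr hq0
  have hcontf : Continuous fun u : ℝ =>
      |a * Real.exp (-b * (t - u)) - a' * Real.exp (-b' * (t - u))| ^ q := by
    apply Continuous.rpow_const _ (fun _ => Or.inr hq0)
    apply Continuous.abs
    apply Continuous.sub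
    · exact continuous_const.mul
        (Real.continuous_exp.comp (continuous_const.mul (continuous_const.sub continuous_id)))
    · exact continuous_const.mul
        (Real.continuous_exp.comp (continuous_const.mul (continuous_const.sub continuous_id)))
  -- pointwise bound
  have hpt : ∀ u ∈ Set.Icc 0 t,
      |a * Real.exp (-b * (t - u)) - a' * Real.exp (-b' * (t - u))| ^ q ≤
      (2 ^ (q-1) * Δa ^ q) * Real.exp (-(c * (t - u))) +
      (2 ^ (q-1) * A ^ q * Δb ^ q) * ((t - u) ^ q * Real.exp (-(c * (t - u)))) := by
    intro u hu
    set s := t - u with hs_def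
    have hs : 0 ≤ s := by simp only [hs_def]; linarith [hu.2]
    have h1 := my_ptwise ε A a a' b b' s hs ha ha' hb hb' hε
    have hD1 : 0 ≤ Δa * Real.exp (-ε * s) := by positivity
    have hD2 : 0 ≤ A * Δb * (s * Real.exp (-ε * s)) := by positivity
    have h2 : |a * Real.exp (-b*s) - a' * Real.exp (-b'*s)| ^ q ≤
        (Δa * Real.exp (-ε * s) + A * Δb * (s * Real.exp (-ε * s))) ^ q :=
      Real.rpow_le_rpow (abs_nonneg _) h1 hq0
    have h3 := my_add_rpow_le _ _ q hD1 hD2 hq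
    have hexpq : Real.exp (-ε * s) ^ q = Real.exp (-(c * s)) := by
      rw [← Real.exp_mul]; congr 1; rw [hc_def]; ring
    have h4 : (Δa * Real.exp (-ε * s)) ^ q = Δa ^ q * Real.exp (-(c * s)) := by
      rw [Real.mul_rpow hΔa0 (Real.exp_pos _).le, hexpq]
    have h5 : (A * Δb * (s * Real.exp (-ε * s))) ^ q
        = A ^ q * Δb ^ q * (s ^ q * Real.exp (-(c * s))) := by
      rw [Real.mul_rpow (by positivity) (by positivity),
        Real.mul_rpow hA.le hΔb0,
        Real.mul_rpow hs (Real.exp_pos _).le, hexpq]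
    calc |a * Real.exp (-b*s) - a' * Real.exp (-b'*s)| ^ q
        ≤ 2 ^ (q-1) * ((Δa * Real.exp (-ε * s)) ^ q
            + (A * Δb * (s * Real.exp (-ε * s))) ^ q) := le_trans h2 h3
      _ = (2 ^ (q-1) * Δa ^ q) * Real.exp (-(c * s)) +
          (2 ^ (q-1) * A ^ q * Δb ^ q) * (s ^ q * Real.exp (-(c * s))) := by
          rw [h4, h5]; ring
  -- integral monotonicity
  have hintf : IntervalIntegrable (fun u =>
      |a * Real.exp (-b * (t - u)) - a' * Real.exp (-b' * (t - u))| ^ q) volume 0 t :=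
    hcontf.intervalIntegrable 0 t
  have hint1 : IntervalIntegrable (fun u => Real.exp (-(c * (t - u)))) volume 0 t :=
    hconte.intervalIntegrable 0 t
  have hint2 : IntervalIntegrable (fun u => (t - u) ^ q * Real.exp (-(c * (t - u)))) volume 0 t :=
    (hcontp.mul hconte).intervalIntegrable 0 t
  have hintg : IntervalIntegrable (fun u =>
      (2 ^ (q-1) * Δa ^ q) * Real.exp (-(c * (t - u))) +
      (2 ^ (q-1) * A ^ q * Δb ^ q) * ((t - u) ^ q * Real.exp (-(c * (t - u))))) volume 0 t :=
    (hint1.const_mul _).add (hint2.const_mul _)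
  have hmono := intervalIntegral.integral_mono_on ht hintf hintg hpt
  refine hmono.trans ?_
  -- split the integral
  rw [intervalIntegral.integral_add (hint1.const_mul _) (hint2.const_mul _),
    intervalIntegral.integral_const_mul, intervalIntegral.integral_const_mul]
  -- change of variables
  have hI1 : (∫ u in (0:ℝ)..t, Real.exp (-(c * (t - u)))) ≤ 1 / c := by
    have := intervalIntegral.integral_comp_sub_left (a := (0:ℝ)) (b := t)
      (fun s => Real.exp (-(c * s))) t
    simp only [sub_zero, sub_self] at this
    rw [this]
    exact my_I1 c t hc ht
  have hI2 : (∫ u in (0:ℝ)..t, (t - u) ^ q * Real.exp (-(c * (t - u)))) ≤ K₂ := by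
    have := intervalIntegral.integral_comp_sub_left (a := (0:ℝ)) (b := t)
      (fun s => s ^ q * Real.exp (-(c * s))) t
    simp only [sub_zero, sub_self] at this
    rw [this]
    exact my_I2 q c t hq0 hc ht
  have hP : (0:ℝ) ≤ 2 ^ (q-1) * Δa ^ q := by positivity
  have hQ : (0:ℝ) ≤ 2 ^ (q-1) * A ^ q * Δb ^ q := by positivity
  have step : (2 ^ (q-1) * Δa ^ q) * (∫ u in (0:ℝ)..t, Real.exp (-(c * (t - u)))) +
      (2 ^ (q-1) * A ^ q * Δb ^ q) *
        (∫ u in (0:ℝ)..t, (t - u) ^ q * Real.exp (-(c * (t - u)))) ≤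
      (2 ^ (q-1) * Δa ^ q) * (1/c) + (2 ^ (q-1) * A ^ q * Δb ^ q) * K₂ := by
    exact add_le_add (mul_le_mul_of_nonneg_left hI1 hP) (mul_le_mul_of_nonneg_left hI2 hQ)
  refine step.trans ?_
  have hΔaq : 0 ≤ Δa ^ q := Real.rpow_nonneg hΔa0 q
  have hΔbq : 0 ≤ Δb ^ q := Real.rpow_nonneg hΔb0 q
  have h2q : (0:ℝ) < 2 ^ (q-1) := by positivity
  have hAq : (0:ℝ) < A ^ q := by positivity
  have hc' : (0:ℝ) < 1/c := by positivity
  nlinarith [mul_nonneg hΔaq hK₂.le, mul_nonneg hΔbq hc'.le,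
    mul_pos h2q hAq, mul_pos h2q hc']
end
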